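/- arXiv:2509.00032 — 3 statements merged into one kernel-verified Lean document; each statement's English description precedes it below -/
import Mathlib

section
/- Let α = ω₁ with open sets the ordinals ≤ ω₁. No cover 𝒰 ⊆ τ \ {ω₁} of ω₁ is a γ-cover: there is no infinite cover 𝒰 such that for every x ∈ ω₁ the set 𝒰 \ 𝒰_x of members not containing x is finite. -/
open Ordinal Set

/-! A γ-cover of ω₁ by countable ordinals has only finitely many members below each of its
members, so it is countable; its supremum is then a countable ordinal, which no member of the
cover can exceed. -/

theorem Set.Countable.of_finite_setOf_le {α : Type*} [LinearOrder α] {s : Set α}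
    (h : ∀ x ∈ s, {y ∈ s | y ≤ x}.Finite) : s.Countable := by
  rw [Set.countable_iff_exists_injOn]
  have hmono : StrictMonoOn (fun x => {y ∈ s | y ≤ x}.ncard) s := by
    intro x hx z hz hxz
    refine Set.ncard_lt_ncard ⟨fun y hy => ⟨hy.1, hy.2.trans hxz.le⟩, fun hsub => ?_⟩ (h z hz)
    exact (hsub ⟨hz, le_rfl⟩).2.not_gt hxz
  exact ⟨_, hmono.injOn⟩

theorem Set.Countable.sSup_lt_omega_one {s : Set Ordinal} (hs : s.Countable)
    (h : ∀ o ∈ s, o < ω₁) : sSup s < ω₁ := by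
  have := hs.to_subtype
  rw [sSup_eq_iSup']
  exact Ordinal.iSup_lt_omega_one fun o => h o o.2

/-- no cover of ω₁ by proper open down-sets is a γ-cover. -/
theorem stmt3 (𝒰 : Set Ordinal) (hsub : ∀ U ∈ 𝒰, U < Ordinal.omega 1)
    (hcov : ∀ x < Ordinal.omega 1, ∃ U ∈ 𝒰, x < U) :
    ¬ (𝒰.Infinite ∧ ∀ x < Ordinal.omega 1, {U ∈ 𝒰 | ¬ x < U}.Finite) := by
  rintro ⟨-, hfin⟩
  have hcount : 𝒰.Countable := .of_finite_setOf_le fun U hU => by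
    simpa only [not_lt] using hfin U (hsub U hU)
  obtain ⟨U, hU, hlt⟩ := hcov _ (hcount.sSup_lt_omega_one hsub)
  exact hlt.not_ge (le_csSup ⟨_, fun V hV => (hsub V hV).le⟩ hU)
end

section
/- The space ω₁ with topology consisting of the ordinals ≤ ω₁ satisfies the selection principle (Ω choose T): every ω-cover contains a subfamily (namely itself) that is a t-cover. -/
/-!
The open sets of ω₁ are initial segments, so they form a chain and the stars
`{U ∈ 𝒰 | x < U}` of any cover are nested; one of two stars is then contained in the
other, and the ω-cover itself is already a t-cover once its stars are infinite. Applying the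
ω-cover property to the singleton `{U}` yields a member strictly above `U`, so no star has a
largest element, and a nonempty set without a largest element is infinite.
-/

open Ordinal Set

namespace Set

variable {α : Type*}

theorem infinite_of_nonempty_of_forall_exists_gt [Preorder α] {s : Set α} (hs : s.Nonempty)
    (h : ∀ a ∈ s, ∃ b ∈ s, a < b) : s.Infinite := fun hfin ↦ by
  obtain ⟨m, hm⟩ := hfin.exists_maximal hs
  obtain ⟨b, hb, hmb⟩ := h m hm.prop
  exact hm.not_gt hb hmb

theorem sep_lt_infinite [Preorder α] {s : Set α} {x : α} (hx : ∃ U ∈ s, x < U)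
    (h : ∀ U ∈ s, ∃ V ∈ s, U < V) : {U ∈ s | x < U}.Infinite := by
  refine infinite_of_nonempty_of_forall_exists_gt hx fun U ⟨hU, hxU⟩ ↦ ?_
  obtain ⟨V, hV, hUV⟩ := h U hU
  exact ⟨V, ⟨hV, hxU.trans hUV⟩, hUV⟩

theorem sep_lt_subset_of_le [Preorder α] (s : Set α) {x y : α} (hxy : x ≤ y) :
    {U ∈ s | y < U} ⊆ {U ∈ s | x < U} :=
  fun _ ⟨hU, hyU⟩ ↦ ⟨hU, hxy.trans_lt hyU⟩

theorem sep_lt_diff_finite_or_finite [LinearOrder α] (s : Set α) (x y : α) :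
    ({U ∈ s | x < U} \ {U ∈ s | y < U}).Finite ∨
      ({U ∈ s | y < U} \ {U ∈ s | x < U}).Finite := by
  rcases le_total x y with hxy | hyx
  · exact .inr <| (sdiff_eq_empty.mpr (sep_lt_subset_of_le s hxy)) ▸ finite_empty
  · exact .inl <| (sdiff_eq_empty.mpr (sep_lt_subset_of_le s hyx)) ▸ finite_empty

end Set

/-- Points of ω₁ are the ordinals `x < ω₁` and open sets the ordinals `U ≤ ω₁`, each identified
with its set of predecessors, so `x ∈ U` is encoded as `x < U`. -/
theorem stmt8 :
    ∀ 𝒰 : Set Ordinal,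
      (∀ U ∈ 𝒰, U < Ordinal.omega 1) →
      (∀ x < Ordinal.omega 1, ∃ U ∈ 𝒰, x < U) →
      (∀ S : Finset Ordinal, (∀ s ∈ S, s < Ordinal.omega 1) →
        ∃ U ∈ 𝒰, ∀ s ∈ S, s < U) →
      ∃ 𝒱 ⊆ 𝒰,
        (∀ x < Ordinal.omega 1, ∃ U ∈ 𝒱, x < U) ∧
        (∀ x < Ordinal.omega 1, {U ∈ 𝒱 | x < U}.Infinite) ∧
        (∀ x y : Ordinal, x < Ordinal.omega 1 → y < Ordinal.omega 1 →
          ({U ∈ 𝒱 | x < U} \ {U ∈ 𝒱 | y < U}).Finite ∨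
          ({U ∈ 𝒱 | y < U} \ {U ∈ 𝒱 | x < U}).Finite) := by
  intro 𝒰 hlt hcov homega
  have hgt : ∀ U ∈ 𝒰, ∃ V ∈ 𝒰, U < V := fun U hU ↦ by
    obtain ⟨V, hV, hUV⟩ := homega {U} (by simpa using hlt U hU)
    exact ⟨V, hV, hUV U (Finset.mem_singleton_self U)⟩
  exact ⟨𝒰, subset_rfl, hcov, fun x hx ↦ sep_lt_infinite (hcov x hx) hgt,
    fun x y _ _ ↦ sep_lt_diff_finite_or_finite 𝒰 x y⟩
end

section
/- There exists a topological space satisfying (Ω choose T) but not (Ω choose Γ); hence the selection principles (Ω choose T) and (Ω choose Γ) are not equivalent. -/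
/-- An open cover of `X`: a family of open sets, not containing `X` itself,
whose union is `X`. -/
def IsCover {X : Type*} [TopologicalSpace X] (𝒰 : Set (Set X)) : Prop :=
  (∀ U ∈ 𝒰, IsOpen U) ∧ Set.univ ∉ 𝒰 ∧ ⋃₀ 𝒰 = Set.univ

/-- The star of `x` with respect to `𝒰`. -/
def star' {X : Type*} (𝒰 : Set (Set X)) (x : X) : Set (Set X) := {U ∈ 𝒰 | x ∈ U}

/-- A large cover: every star is infinite. -/
def IsLargeCover {X : Type*} [TopologicalSpace X] (𝒰 : Set (Set X)) : Prop :=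
  IsCover 𝒰 ∧ ∀ x : X, (star' 𝒰 x).Infinite

/-- An ω-cover: every finite set of points lies inside a single member. -/
def IsOmegaCover {X : Type*} [TopologicalSpace X] (𝒰 : Set (Set X)) : Prop :=
  IsCover 𝒰 ∧ ∀ S : Finset X, ∃ U ∈ 𝒰, ↑S ⊆ U

/-- A t-cover: a large cover such that for all `x, y` at least one of the
star-differences is finite. -/
def IsTCover {X : Type*} [TopologicalSpace X] (𝒰 : Set (Set X)) : Prop :=
  IsLargeCover 𝒰 ∧ ∀ x y : X,
    (star' 𝒰 x \ star' 𝒰 y).Finite ∨ (star' 𝒰 y \ star' 𝒰 x).Finite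

/-- A γ-cover: an infinite cover such that every point lies in all but
finitely many members. -/
def IsGammaCover {X : Type*} [TopologicalSpace X] (𝒰 : Set (Set X)) : Prop :=
  IsCover 𝒰 ∧ 𝒰.Infinite ∧ ∀ x : X, (𝒰 \ star' 𝒰 x).Finite

/-!
Take `ω₁`, or any linear order without maximum in which every sequence is bounded above, with the
lower topology, whose proper open sets are the initial segments. Its open sets form a chain, so
the stars of any cover are nested and every ω-cover is already a t-cover. On the other hand, from
the infinitely many initial segments of a γ-subcover of `{Iio a | a}` pick a sequence `Iio (a n)`;
an upper bound of the `a n` lies outside all of them.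
-/

open Set Topology

theorem star'_diff_eq_empty_or_of_isChain {X : Type*} {𝒰 : Set (Set X)}
    (h𝒰 : IsChain (· ⊆ ·) 𝒰) (x y : X) :
    star' 𝒰 x \ star' 𝒰 y = ∅ ∨ star' 𝒰 y \ star' 𝒰 x = ∅ := by
  by_contra! hne
  obtain ⟨U, ⟨hU, hxU⟩, hyU⟩ := hne.1
  obtain ⟨V, ⟨hV, hyV⟩, hxV⟩ := hne.2
  rcases h𝒰.total hU hV with hUV | hVU
  · exact hxV ⟨hV, hUV hxU⟩
  · exact hyU ⟨hU, hVU hyV⟩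

section OmegaCover

variable {X : Type*} [TopologicalSpace X] {𝒰 : Set (Set X)}

/-- If the star of `x` were finite, one point outside each of its members together with `x`
would lie in no member of `𝒰`. -/
theorem IsOmegaCover.star'_infinite (h𝒰 : IsOmegaCover 𝒰) (x : X) :
    (star' 𝒰 x).Infinite := by
  classical
  intro hfin
  have hproper : ∀ U, ∃ p, U ∈ 𝒰 → p ∉ U := by
    intro U
    by_cases hU : U ∈ 𝒰
    · obtain ⟨p, hp⟩ := (ne_univ_iff_exists_notMem U).1 (ne_of_mem_of_not_mem hU h𝒰.1.2.1)
      exact ⟨p, fun _ => hp⟩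
    · exact ⟨x, fun h => absurd h hU⟩
  choose p hp using hproper
  obtain ⟨U, hU, hsub⟩ := h𝒰.2 (insert x (hfin.toFinset.image p))
  have hxU : U ∈ star' 𝒰 x := ⟨hU, hsub (by simp)⟩
  exact hp U hU <| hsub <|
    Finset.mem_insert_of_mem (Finset.mem_image_of_mem p (hfin.mem_toFinset.2 hxU))

theorem IsOmegaCover.isTCover_of_isChain (h𝒰 : IsOmegaCover 𝒰)
    (hchain : IsChain (· ⊆ ·) 𝒰) : IsTCover 𝒰 :=
  ⟨⟨h𝒰.1, h𝒰.star'_infinite⟩, fun x y => by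
    rcases star'_diff_eq_empty_or_of_isChain hchain x y with h | h <;> simp [h]⟩

end OmegaCover

namespace Topology.IsLower

variable {α : Type*} [LinearOrder α] [TopologicalSpace α] [IsLower α]

theorem isChain_of_forall_isOpen {𝒰 : Set (Set α)} (h𝒰 : ∀ U ∈ 𝒰, IsOpen U) :
    IsChain (· ⊆ ·) 𝒰 := fun U hU V hV _ =>
  (isLowerSet_of_isOpen (h𝒰 U hU)).total (isLowerSet_of_isOpen (h𝒰 V hV))

theorem isTCover_of_isOmegaCover {𝒰 : Set (Set α)} (h𝒰 : IsOmegaCover 𝒰) :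
    IsTCover 𝒰 :=
  h𝒰.isTCover_of_isChain (isChain_of_forall_isOpen h𝒰.1.1)

theorem isOmegaCover_range_Iio [Nonempty α] [NoMaxOrder α] :
    IsOmegaCover (range (Iio : α → Set α)) := by
  have hfin : ∀ S : Finset α, ∃ U ∈ range (Iio : α → Set α), ↑S ⊆ U := fun S => by
    obtain ⟨M, hM⟩ := S.exists_le
    obtain ⟨b, hb⟩ := exists_gt M
    exact ⟨Iio b, mem_range_self b, fun a ha => (hM a ha).trans_lt hb⟩
  refine ⟨⟨?_, ?_, ?_⟩, hfin⟩
  · rintro _ ⟨a, rfl⟩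
    exact isOpen_Iio
  · rintro ⟨a, ha⟩
    exact self_notMem_Iio (ha ▸ mem_univ a)
  · refine eq_univ_of_forall fun a => ?_
    obtain ⟨U, hU, haU⟩ := hfin {a}
    exact ⟨U, hU, haU (Finset.mem_singleton_self a)⟩

end Topology.IsLower

theorem not_isGammaCover_of_subset_range_Iio {α : Type*} [LinearOrder α]
    [TopologicalSpace α] (hα : ∀ f : ℕ → α, BddAbove (range f)) {𝒱 : Set (Set α)}
    (h𝒱 : 𝒱 ⊆ range Iio) : ¬ IsGammaCover 𝒱 := by
  rintro ⟨-, h𝒱inf, hγ⟩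
  have hT : (Iio ⁻¹' 𝒱).Infinite :=
    Infinite.of_image Iio ((image_preimage_eq_of_subset h𝒱).symm ▸ h𝒱inf)
  let a : ℕ → α := fun n => hT.natEmbedding _ n
  have ha : Function.Injective a := Subtype.val_injective.comp (hT.natEmbedding _).injective
  obtain ⟨b, hb⟩ := hα a
  refine (infinite_range_of_injective (Iio_injective.comp ha)).mono ?_ (hγ b)
  rintro _ ⟨n, rfl⟩
  exact ⟨(hT.natEmbedding _ n).2, fun h => (h.2 : b < a n).not_ge (hb ⟨n, rfl⟩)⟩

/-- there is a topological space satisfying (Ω choose T) but not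
(Ω choose Γ); the two selection principles are not equivalent. -/
theorem stmt11 : ∃ (X : Type 1) (_ : TopologicalSpace X),
    (∀ 𝒰 : Set (Set X), IsOmegaCover 𝒰 → ∃ 𝒱 ⊆ 𝒰, IsTCover 𝒱) ∧
    ¬ (∀ 𝒰 : Set (Set X), IsOmegaCover 𝒰 → ∃ 𝒱 ⊆ 𝒰, IsGammaCover 𝒱) := by
  have : NoMaxOrder (WithLower Ordinal.{0}) := inferInstanceAs (NoMaxOrder Ordinal)
  refine ⟨WithLower Ordinal.{0}, inferInstance,
    fun 𝒰 h𝒰 => ⟨𝒰, subset_rfl, IsLower.isTCover_of_isOmegaCover h𝒰⟩,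
    fun hΓ => ?_⟩
  obtain ⟨𝒱, h𝒱, hγ⟩ := hΓ _ IsLower.isOmegaCover_range_Iio
  have hbdd (f : ℕ → WithLower Ordinal.{0}) : BddAbove (range f) :=
    @Ordinal.bddAbove_of_small _ (small_range f)
  exact not_isGammaCover_of_subset_range_Iio hbdd h𝒱 hγ
end
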